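/- There exist constants c > 0, C > 0, and R* > 0 such that for every R with 0 < R < R*, the function F_R(μ) := (2 − 8πR²)·( cos(μR)/(μR²) − sin(μR)/(μ²R³) ) + sin(μR)/R, μ > 0, possesses a smallest positive zero μ₁(R), and this smallest zero satisfies c/R ≤ μ₁(R) ≤ C/R. In particular, the lowest oscillation frequency √λ₁ of a small hard star scales like the reciprocal of its radius: √λ₁ ∼ R⁻¹ as R → 0. -/

import Mathlib

/-!
Writing `x = μR` and `a = 2 - 8πR²`, one has `F_R(μ) = G_a(x) / (μ²R³)` with
`G_a(x) = a (x cos x - sin x) + x² sin x`, so the positive zeros of `F_R` are `x / R` for the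
positive zeros `x` of `G_a`. For small `R` we have `0 < a ≤ 2`. The bounds
`sin x - x cos x ≤ x³/3` and `sin x > x - x³/6` give `G_a(x) ≥ x³/3 - x⁵/6 > 0` on `(0, 1]`,
while `G_a(π) = -aπ < 0`; hence the least positive zero of `G_a` lies in `[1, π]`, and the
least positive zero of `F_R` in `[1/R, π/R]`.
-/

open Real Set

noncomputable section

/-- The leading-order boundary-condition function
`F_R(μ) = (2 − 8πR²)·( cos(μR)/(μR²) − sin(μR)/(μ²R³) ) + sin(μR)/R`. -/
def FR (R μ : ℝ) : ℝ :=
  (2 - 8 * π * R ^ 2) *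
      (Real.cos (μ * R) / (μ * R ^ 2) - Real.sin (μ * R) / (μ ^ 2 * R ^ 3)) +
    Real.sin (μ * R) / R

theorem sin_sub_mul_cos_le {x : ℝ} (hx : 0 ≤ x) : sin x - x * cos x ≤ x ^ 3 / 3 := by
  let f (t : ℝ) : ℝ := t ^ 3 / 3 - (sin t - t * cos t)
  have hderiv (t : ℝ) : deriv f t = t * (t - sin t) := by
    simp (disch := fun_prop) only [f, deriv_fun_sub, deriv_div_const, deriv_fun_pow,
      Nat.cast_ofNat, Nat.add_one_sub_one, deriv_id'', mul_one, Real.deriv_sin, deriv_fun_mul,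
      one_mul, deriv_cos', mul_neg, sub_add_cancel_left, neg_neg]
    ring
  have hmono : MonotoneOn f (Ici 0) := by
    refine monotoneOn_of_deriv_nonneg (convex_Ici 0) (by fun_prop) (by fun_prop) fun t ht => ?_
    rw [interior_Ici, mem_Ioi] at ht
    rw [hderiv]
    exact mul_nonneg ht.le (sub_nonneg.2 (sin_le ht.le))
  simpa [f] using hmono self_mem_Ici hx hx

def boundaryFn (a x : ℝ) : ℝ := a * (x * cos x - sin x) + x ^ 2 * sin x

theorem FR_eq_boundaryFn_div {R μ : ℝ} (hR : R ≠ 0) (hμ : μ ≠ 0) :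
    FR R μ = boundaryFn (2 - 8 * π * R ^ 2) (μ * R) / (μ ^ 2 * R ^ 3) := by
  unfold FR boundaryFn
  field_simp

theorem FR_eq_zero_iff {R μ : ℝ} (hR : R ≠ 0) (hμ : μ ≠ 0) :
    FR R μ = 0 ↔ boundaryFn (2 - 8 * π * R ^ 2) (μ * R) = 0 := by
  rw [FR_eq_boundaryFn_div hR hμ, div_eq_zero_iff]
  simp [hR, hμ]

theorem boundaryFn_pos {a x : ℝ} (ha₀ : 0 ≤ a) (ha₂ : a ≤ 2) (hx₀ : 0 < x) (hx₁ : x ≤ 1) :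
    0 < boundaryFn a x := by
  have hcubic := sin_sub_mul_cos_le hx₀.le
  have hsin := sin_gt_sub_cube hx₀
  calc 0 < x ^ 3 * (1 / 3 - x ^ 2 / 6) := by
        have : x ^ 2 ≤ 1 := pow_le_one₀ hx₀.le hx₁
        have : 0 < x ^ 3 := by positivity
        nlinarith
    _ = -2 * (x ^ 3 / 3) + x ^ 2 * (x - x ^ 3 / 6) := by ring
    _ ≤ a * -(x ^ 3 / 3) + x ^ 2 * sin x := by rw [mul_neg, neg_mul]; gcongr
    _ ≤ a * (x * cos x - sin x) + x ^ 2 * sin x := by gcongr; linarith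

theorem boundaryFn_pi_neg {a : ℝ} (ha : 0 < a) : boundaryFn a π < 0 := by
  simp only [boundaryFn, cos_pi, sin_pi]
  nlinarith [pi_pos]

theorem continuous_boundaryFn (a : ℝ) : Continuous (boundaryFn a) := by
  unfold boundaryFn; fun_prop

theorem ContinuousOn.exists_isLeast_zero {f : ℝ → ℝ} {a b : ℝ} (hab : a ≤ b)
    (hf : ContinuousOn f (Icc a b)) (hb : f b ≤ 0) (ha : 0 ≤ f a) :
    ∃ x, IsLeast {y ∈ Icc a b | f y = 0} x := by
  obtain ⟨x₀, hx₀, hfx₀⟩ := intermediate_value_Icc' hab hf ⟨hb, ha⟩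
  have hclosed : IsClosed {y ∈ Icc a b | f y = 0} :=
    hf.preimage_isClosed_of_isClosed isClosed_Icc isClosed_singleton
  exact ⟨_, hclosed.isLeast_csInf ⟨x₀, hx₀, hfx₀⟩ ⟨a, fun y hy => hy.1.1⟩⟩

/-- For all sufficiently small `R`, `F_R` has a smallest positive zero `μ₁(R)`, and
`μ₁(R) ∼ R⁻¹`: the lowest oscillation frequency of a small hard star scales like
the reciprocal of its radius. -/
theorem stmt18 :
    ∃ c > (0:ℝ), ∃ C > (0:ℝ), ∃ Rstar > (0:ℝ), ∀ R : ℝ, 0 < R → R < Rstar →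
      ∃ μ₁ > (0:ℝ), FR R μ₁ = 0 ∧ (∀ μ : ℝ, 0 < μ → FR R μ = 0 → μ₁ ≤ μ) ∧
        c / R ≤ μ₁ ∧ μ₁ ≤ C / R := by
  refine ⟨1, one_pos, π, pi_pos, 1 / 4, by norm_num, fun R hR hR₄ => ?_⟩
  set a := 2 - 8 * π * R ^ 2
  have hR_sq : R ^ 2 < 1 / 16 := by nlinarith
  have ha₀ : 0 < a := by simp only [a]; nlinarith [pi_lt_four]
  have ha₂ : a ≤ 2 := by simp only [a]; nlinarith [pi_pos]
  obtain ⟨x₁, ⟨⟨hx₁, hx₁π⟩, hGx₁⟩, hleast⟩ :=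
    (continuous_boundaryFn a).continuousOn.exists_isLeast_zero (by linarith [pi_gt_three])
      (boundaryFn_pi_neg ha₀).le (boundaryFn_pos ha₀.le ha₂ one_pos le_rfl).le
  refine ⟨x₁ / R, by positivity, ?_, fun μ hμ hFμ => ?_, by gcongr, by gcongr⟩
  · rwa [FR_eq_zero_iff hR.ne' (by positivity), div_mul_cancel₀ _ hR.ne']
  rw [FR_eq_zero_iff hR.ne' hμ.ne'] at hFμ
  have h₁ : 1 < μ * R := by
    by_contra! h
    exact (boundaryFn_pos ha₀.le ha₂ (by positivity) h).ne' hFμ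
  have hx₁μ : x₁ ≤ μ * R := by
    rcases le_or_gt (μ * R) π with h | h
    · exact hleast ⟨⟨h₁.le, h⟩, hFμ⟩
    · exact hx₁π.trans h.le
  rwa [div_le_iff₀ hR]

end
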